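/- Let G = (V, E) be a directed graph with distinguished vertices s, t. Construct an undirected bipartite graph H with vertex set V_in ∪ V_out, where V_in = {v_in : v ∈ V, v ≠ s} and V_out = {v_out : v ∈ V, v ≠ t}, and edge set {(u_out, v_in) : (u,v) ∈ E, v ≠ s, u ≠ t} ∪ {(v_in, v_out) : v ∈ V, v ≠ s, t}. Then there is a directed path from s to t in G if and only if H has a perfect matching. -/

import Mathlib

/-!
A perfect matching of `H` pairs every `u_out` (`u ≠ t`) with a distinct `v_in` (`v ≠ s`), so it is
the same as a bijection `V ∖ {t} ≃ V ∖ {s}` sending each `u` along an edge of `G` or to itself,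
i.e. a permutation `σ` of `V` with `σ t = s` that moves every `u ≠ t` along an edge. An `s`–`t`
path can be shortened to a simple one, and closing it up by `t ↦ s` gives such a `σ` as a cycle.
Conversely, the cycle of `σ` through `t`, followed from `σ t = s`, is a walk that reaches `t`.
-/

open Equiv Relation

namespace Relation

variable {V : Type*} {E : V → V → Prop} {s t : V}

theorem ReflTransGen.exists_nodup_isChain_cons (h : ReflTransGen E s t) :
    ∃ l : List V, (s :: l).Nodup ∧ (s :: l).IsChain E ∧
      (s :: l).getLast (List.cons_ne_nil _ _) = t := by
  induction h using ReflTransGen.head_induction_on with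
  | refl => exact ⟨[], List.nodup_singleton _, .singleton _, rfl⟩
  | @head a b hab _ ih =>
    obtain ⟨l, hnd, hch, hlast⟩ := ih
    by_cases ha : a ∈ b :: l
    · obtain ⟨l₁, l₂, hsplit⟩ := List.append_of_mem ha
      have hsuffix : a :: l₂ <:+ b :: l := ⟨l₁, hsplit.symm⟩
      refine ⟨l₂, hnd.sublist hsuffix.sublist, hch.suffix hsuffix, ?_⟩
      rw [← hlast, List.getLast_congr _ _ hsplit, List.getLast_append_of_ne_nil]
      simp
    · exact ⟨b :: l, List.nodup_cons.2 ⟨ha, hnd⟩, hch.cons_cons hab,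
        by rwa [List.getLast_cons_cons]⟩

theorem ReflTransGen.exists_perm [DecidableEq V] (h : ReflTransGen E s t) :
    ∃ σ : Perm V, σ t = s ∧ ∀ u ≠ t, ReflGen E u (σ u) := by
  obtain ⟨l, hnd, hch, hlast⟩ := h.exists_nodup_isChain_cons
  refine ⟨(s :: l).formPerm, hlast ▸ List.formPerm_apply_getLast s l, fun u hu => ?_⟩
  by_cases hmem : u ∈ s :: l
  · obtain ⟨i, hi, rfl⟩ := List.getElem_of_mem hmem
    have hi' : i + 1 < (s :: l).length := by
      by_contra! hge
      refine hu ?_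
      rw [← hlast, List.getLast_eq_getElem]
      congr 1
      omega
    rw [List.formPerm_apply_lt_getElem _ hnd i hi']
    exact .single (List.isChain_iff_getElem.1 hch i hi')
  · rw [List.formPerm_apply_of_notMem hmem]

theorem reflTransGen_of_iterate_eq {f : V → V} (hf : ∀ u ≠ t, ReflGen E u (f u)) {n : ℕ}
    (h : f^[n] s = t) : ReflTransGen E s t := by
  induction n generalizing s with
  | zero => exact h ▸ .refl
  | succ n ih =>
    by_cases hs : s = t
    · exact hs ▸ .refl
    · exact (hf s hs).to_reflTransGen.trans (ih h)

theorem reflTransGen_of_perm_apply_eq [Finite V] {σ : Perm V} (hσ : σ t = s)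
    (hf : ∀ u ≠ t, ReflGen E u (σ u)) : ReflTransGen E s t := by
  have hts : σ.SameCycle t s := ⟨1, by simpa using hσ⟩
  obtain ⟨n, hn⟩ := hts.symm.exists_nat_pow_eq
  exact reflTransGen_of_iterate_eq hf (n := n) (by rwa [σ.iterate_eq_pow])

theorem reflTransGen_iff_exists_perm [Finite V] [DecidableEq V] :
    ReflTransGen E s t ↔ ∃ σ : Perm V, σ t = s ∧ ∀ u ≠ t, ReflGen E u (σ u) :=
  ⟨ReflTransGen.exists_perm, fun ⟨_, hσ, hf⟩ => reflTransGen_of_perm_apply_eq hσ hf⟩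

end Relation

theorem Equiv.exists_perm_iff_exists_equiv_subtype_ne {V : Type*} [DecidableEq V] {s t : V}
    (p : V → V → Prop) :
    (∃ σ : Perm V, σ t = s ∧ ∀ u ≠ t, p u (σ u)) ↔
      ∃ f : {v // v ≠ t} ≃ {v // v ≠ s}, ∀ u : {v // v ≠ t}, p u (f u) := by
  constructor
  · rintro ⟨σ, hσ, hp⟩
    exact ⟨σ.subtypeEquiv fun u => (σ.injective.ne_iff' hσ).symm, fun u => hp u u.2⟩
  · rintro ⟨f, hp⟩
    refine ⟨(optionSubtypeNe t).symm.trans (f.optionCongr.trans (optionSubtypeNe s)), by simp, ?_⟩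
    intro u hu
    simpa [optionSubtypeNe_symm_of_ne hu] using hp ⟨u, hu⟩

namespace SimpleGraph

variable {α β : Type*} {G : SimpleGraph (α ⊕ β)}

theorem Subgraph.IsPerfectMatching.exists_adj_inr_inl {M : G.Subgraph}
    (hM : M.IsPerfectMatching) (hβ : ∀ b b', ¬G.Adj (.inr b) (.inr b')) (b : β) :
    ∃ a, M.Adj (.inr b) (.inl a) := by
  obtain ⟨a | b', hadj, -⟩ := Subgraph.isPerfectMatching_iff.1 hM (.inr b)
  · exact ⟨a, hadj⟩
  · exact (hβ b b' (M.adj_sub hadj)).elim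

theorem Subgraph.IsPerfectMatching.exists_adj_inl_inr {M : G.Subgraph}
    (hM : M.IsPerfectMatching) (hα : ∀ a a', ¬G.Adj (.inl a) (.inl a')) (a : α) :
    ∃ b, M.Adj (.inl a) (.inr b) := by
  obtain ⟨a' | b, hadj, -⟩ := Subgraph.isPerfectMatching_iff.1 hM (.inl a)
  · exact (hα a a' (M.adj_sub hadj)).elim
  · exact ⟨b, hadj⟩

theorem exists_isPerfectMatching_iff_exists_equiv (hα : ∀ a a', ¬G.Adj (.inl a) (.inl a'))
    (hβ : ∀ b b', ¬G.Adj (.inr b) (.inr b')) :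
    (∃ M : G.Subgraph, M.IsPerfectMatching) ↔ ∃ f : β ≃ α, ∀ b, G.Adj (.inr b) (.inl (f b)) := by
  constructor
  · rintro ⟨M, hM⟩
    choose f hf using hM.exists_adj_inr_inl hβ
    have hbij : Function.Bijective f := by
      refine ⟨fun b b' hbb' => ?_, fun a => ?_⟩
      · exact Sum.inr_injective (hM.1.eq_of_adj_right (hf b) (hbb' ▸ hf b'))
      · obtain ⟨b, hb⟩ := hM.exists_adj_inl_inr hα a
        exact ⟨b, Sum.inl_injective (hM.1.eq_of_adj_left (hf b) hb.symm)⟩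
    exact ⟨.ofBijective f hbij, fun b => M.adj_sub (hf b)⟩
  · rintro ⟨f, hf⟩
    let H := fromRel fun p q : α ⊕ β => ∃ b, p = .inr b ∧ q = .inl (f b)
    have hHG : H ≤ G := by
      rintro p q ⟨-, ⟨b, rfl, rfl⟩ | ⟨b, rfl, rfl⟩⟩
      exacts [hf b, (hf b).symm]
    refine ⟨G.toSubgraph H hHG, Subgraph.isPerfectMatching_iff.2 ?_⟩
    rintro (a | b)
    · refine ⟨.inr (f.symm a), by simp [H], ?_⟩
      rintro (a' | b') h <;> simp_all [H]
    · refine ⟨.inl (f b), by simp [H], ?_⟩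
      rintro (a' | b') h <;> simp_all [H]

end SimpleGraph

theorem stmt_1 {V : Type*} [Fintype V] [DecidableEq V]
    (E : V → V → Prop) (s t : V) :
    Relation.ReflTransGen E s t ↔
      ∃ M : (SimpleGraph.fromRel
          (fun p q : ({v : V // v ≠ s} ⊕ {v : V // v ≠ t}) =>
            match p, q with
            | Sum.inr u, Sum.inl v => E u.1 v.1 ∨ u.1 = v.1
            | _, _ => False)).Subgraph,
        M.IsPerfectMatching := by
  rw [reflTransGen_iff_exists_perm, exists_perm_iff_exists_equiv_subtype_ne,
    SimpleGraph.exists_isPerfectMatching_iff_exists_equiv]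
  · simp [reflGen_iff, or_comm, eq_comm]
  all_goals simp
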